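/- Let 0 < p < 1, n_k ≥ 3, and f_{n_k} := D_{2^{n_k+1}} − D_{2^{n_k}}. For each 0 ≤ s < n_k choose q with 2^{n_k} < q < 2^{n_k+1} and [q] = s. Then for every x ∈ I_{s+1}(e_s) one has |S_q f_{n_k}(x)| ≥ c · 2^s for an absolute constant c > 0. -/

import Mathlib

/-! Orthonormality of the Walsh system makes the Fourier coefficients of
`f_n = D_{2^{n+1}} - D_{2^n}` the indicator of `[2^n, 2^{n+1})`, so `S_q f_n = D_q - D_{2^n}`.
Write `q = 2^{s+1} A + 2^s` with `s = [q]`. On `I_{s+1}(e_s)` we have `r_s = -1`, so pairing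
`k` with `k xor 2^s` makes every `D_{2^{s+1} A}` vanish there, `D_{2^n}` included; and since
the first `s` coordinates vanish there, the last `2^s` Walsh functions below `q` all agree with
`w_{2^{s+1} A}`. Hence `|S_q f_n| = 2^s` on `I_{s+1}(e_s)`, and `c = 1` works. -/

open MeasureTheory Finset ENNReal NNReal

noncomputable section

/-- The dyadic (Walsh) group `G = (ℤ/2)^ℕ`. -/
abbrev G : Type := ℕ → ZMod 2

/-- The dyadic interval `I_n(x)`: points agreeing with `x` in the first `n` coordinates. -/
def cyl (n : ℕ) (x : G) : Set G := {y : G | ∀ j < n, y j = x j}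

/-- The dyadic interval `I_n = I_n(0)`. -/
def Icyl (n : ℕ) : Set G := cyl n 0

/-- The `k`-th Rademacher function `r_k(x) = (-1)^{x_k}`. -/
def rad (k : ℕ) (x : G) : ℝ := (-1 : ℝ) ^ (x k).val

/-- The `n`-th Walsh function `w_n = ∏_k r_k^{n_k}`, `n_k` the binary digits of `n`. -/
def walsh (n : ℕ) (x : G) : ℝ :=
  ∏ k ∈ Finset.range n, if n.testBit k then rad k x else 1

/-- The `n`-th Walsh–Dirichlet kernel `D_n = ∑_{k<n} w_k`. -/
def dirichlet (n : ℕ) (x : G) : ℝ := ∑ k ∈ Finset.range n, walsh k x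

/-- `k`-th Walsh–Fourier coefficient of `f` with respect to the measure `μ`. -/
def coef (μ : Measure G) (f : G → ℝ) (k : ℕ) : ℝ := ∫ x, f x * walsh k x ∂μ

/-- `n`-th partial sum of the Walsh–Fourier series of `f`. -/
def psum (μ : Measure G) (n : ℕ) (f : G → ℝ) (x : G) : ℝ :=
  ∑ k ∈ Finset.range n, coef μ f k * walsh k x

/-- `|n|`: position of the highest nonzero binary digit of `n`. -/
def hi (n : ℕ) : ℕ := Nat.log 2 n

/-- `[n]`: position of the lowest nonzero binary digit of `n`. -/
def lo (n : ℕ) : ℕ := padicValNat 2 n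

/-- `ρ(n) = |n| - [n]`. -/
def rho (n : ℕ) : ℕ := hi n - lo n

/-- `e_m ∈ G`: the element with `m`-th coordinate `1` and all others `0`. -/
def eG (m : ℕ) : G := fun j => if j = m then 1 else 0

/-- `a` is a `p`-atom supported on the dyadic interval `I_M`. -/
def IsPAtom (μ : Measure G) (p : ℝ) (M : ℕ) (a : G → ℝ) : Prop :=
  Measurable a ∧ (∀ x, x ∉ Icyl M → a x = 0) ∧ (∫ x, a x ∂μ) = 0 ∧
    ∀ x, |a x| ≤ (2 : ℝ) ^ ((M : ℝ) / p)

/-- The hypothesis that `μ` is the Haar (fair-coin product) probability measure on `G`,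
characterized by its values on dyadic intervals. -/
def IsHaarG (μ : Measure G) : Prop := ∀ (n : ℕ) (x : G), μ (cyl n x) = 2⁻¹ ^ n

/-- The `p`-th power of the `H_p` quasi-norm: `∫ (sup_n |S_{2^n} f|)^p dμ`. -/
def HpP (μ : Measure G) (p : ℝ) (f : G → ℝ) : ℝ≥0∞ :=
  ∫⁻ x, (⨆ n : ℕ, ENNReal.ofReal |psum μ (2 ^ n) f x|) ^ p ∂μ

/-- The weighted maximal operator `sup_n |S_n f| / 2^{ρ(n)(1/p-1)}` (with values in `ℝ≥0∞`). -/
def maxW (μ : Measure G) (p : ℝ) (f : G → ℝ) (x : G) : ℝ≥0∞ :=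
  ⨆ n : ℕ, ENNReal.ofReal (|psum μ n f x| / 2 ^ ((rho n : ℝ) * (1 / p - 1)))

/-- The `p`-th power of the weak-`L_p` quasi-norm of a `ℝ≥0∞`-valued function. -/
def weakLpP (μ : Measure G) (p : ℝ) (g : G → ℝ≥0∞) : ℝ≥0∞ :=
  ⨆ t : ℝ≥0, (t : ℝ≥0∞) ^ p * μ {x | (t : ℝ≥0∞) < g x}

lemma Nat.two_pow_mul_add_eq_xor {i b : ℕ} (hb : b < 2 ^ i) (a : ℕ) :
    2 ^ i * a + b = 2 ^ i * a ^^^ b := by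
  refine Nat.eq_of_testBit_eq fun j => ?_
  rw [Nat.testBit_two_pow_mul_add a hb, Nat.testBit_xor, Nat.testBit_two_pow_mul]
  by_cases hj : j < i
  · simp [hj, not_le.2 hj]
  · simp [not_lt.1 hj,
      Nat.testBit_lt_two_pow (hb.trans_le (Nat.pow_le_pow_right two_pos (not_lt.1 hj)))]

lemma exists_eq_two_pow_lo_succ_mul_add {m : ℕ} (hm : m ≠ 0) :
    ∃ A, m = 2 ^ (lo m + 1) * A + 2 ^ lo m := by
  obtain ⟨k, n, ⟨A, rfl⟩, rfl⟩ := Nat.exists_eq_two_pow_mul_odd hm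
  have hlo : lo (2 ^ k * (2 * A + 1)) = k := by
    rw [lo, padicValNat.mul (by positivity) (by omega), padicValNat.prime_pow,
      padicValNat.eq_zero_of_not_dvd (by omega), add_zero]
  exact ⟨A, by rw [hlo]; ring⟩

lemma rad_add (k : ℕ) (x y : G) : rad k (x + y) = rad k x * rad k y := by
  rw [rad, rad, rad, Pi.add_apply, ZMod.val_add, ← pow_add, ← neg_one_pow_eq_pow_mod_two]

lemma abs_walsh (m : ℕ) (x : G) : |walsh m x| = 1 := by
  rw [walsh, abs_prod]
  refine prod_eq_one fun k _ => ?_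
  split <;> simp [rad, abs_pow]

lemma walsh_congr {m : ℕ} {x y : G} (h : ∀ j < m, x j = y j) : walsh m x = walsh m y :=
  prod_congr rfl fun k hk => by rw [rad, rad, h k (mem_range.1 hk)]

lemma walsh_add (m : ℕ) (x y : G) : walsh m (x + y) = walsh m x * walsh m y := by
  simp only [walsh, ← prod_mul_distrib, rad_add]
  refine prod_congr rfl fun k _ => ?_
  split <;> simp

lemma walsh_eq_prod_range {m L : ℕ} (hm : m < 2 ^ L) (x : G) :
    walsh m x = ∏ k ∈ range L, if m.testBit k then rad k x else 1 := by
  have hbit : ∀ k, m.testBit k → k < min m L := fun k hk =>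
    have := Nat.ge_two_pow_of_testBit hk
    lt_min (lt_of_lt_of_le Nat.lt_two_pow_self this)
      ((Nat.pow_lt_pow_iff_right (by norm_num)).1 (lt_of_le_of_lt this hm))
  have hout : ∀ N, min m L ≤ N → ∀ k ∈ range N, k ∉ range (min m L) →
      (if m.testBit k then rad k x else 1) = 1 := fun N _ k _ hk => by
    rw [if_neg fun hb => hk (mem_range.2 (hbit k hb))]
  rw [walsh, ← prod_subset (range_subset_range.2 (min_le_left m L))
    (hout m (min_le_left m L)), prod_subset (range_subset_range.2
    (min_le_right m L)) (hout L (min_le_right m L))]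

lemma walsh_mul (j k : ℕ) (x : G) : walsh j x * walsh k x = walsh (j ^^^ k) x := by
  obtain ⟨L, hj, hk⟩ : ∃ L, j < 2 ^ L ∧ k < 2 ^ L :=
    ⟨j + k, (Nat.le_add_right j k).trans_lt Nat.lt_two_pow_self,
      (Nat.le_add_left k j).trans_lt Nat.lt_two_pow_self⟩
  rw [walsh_eq_prod_range hj, walsh_eq_prod_range hk,
    walsh_eq_prod_range (Nat.xor_lt_two_pow hj hk), ← prod_mul_distrib]
  refine prod_congr rfl fun i _ => ?_
  have hrad : rad i x * rad i x = 1 := by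
    rw [rad, ← pow_add, ← two_mul, pow_mul]; norm_num
  rw [Nat.testBit_xor]
  cases j.testBit i <;> cases k.testBit i <;> simp [hrad]

lemma walsh_two_pow (s : ℕ) (x : G) : walsh (2 ^ s) x = rad s x := by
  rw [walsh_eq_prod_range (Nat.pow_lt_pow_right (by norm_num) (Nat.lt_succ_self s))]
  simp [Nat.testBit_two_pow]

lemma walsh_eq_one_of_lt_two_pow {r s : ℕ} (hr : r < 2 ^ s) {x : G} (hx : ∀ j < s, x j = 0) :
    walsh r x = 1 := by
  rw [walsh_eq_prod_range hr]
  refine prod_eq_one fun k hk => ?_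
  simp [rad, hx k (mem_range.1 hk)]

lemma walsh_eG {m t : ℕ} (ht : m.testBit t) : walsh m (eG t) = -1 := by
  have htm : t < m := lt_of_lt_of_le Nat.lt_two_pow_self (Nat.ge_two_pow_of_testBit ht)
  have hfac : ∀ k ∈ range m, (if m.testBit k then rad k (eG t) else 1)
      = if t = k then -1 else 1 := by
    rintro k -
    by_cases hk : t = k
    · subst hk; simp [ht, rad, eG, ZMod.val_one]
    · simp [hk, rad, eG, Ne.symm hk]
  rw [walsh, prod_congr rfl hfac, prod_ite_eq, if_pos (mem_range.2 htm)]

section Haar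

variable {μ : Measure G}

lemma IsHaarG.isProbabilityMeasure (hμ : IsHaarG μ) : IsProbabilityMeasure μ :=
  ⟨by simpa [cyl] using hμ 0 0⟩

lemma measurableSet_cyl (n : ℕ) (x : G) : MeasurableSet (cyl n x) := by
  have : cyl n x = ⋂ j ∈ range n, (fun y : G => y j) ⁻¹' {x j} := by
    ext y; simp [cyl]
  rw [this]
  exact measurableSet_biInter _ fun j _ => measurable_pi_apply j (measurableSet_singleton _)

lemma measurable_walsh (m : ℕ) : Measurable (walsh m) :=
  measurable_prod _ fun k _ => Measurable.ite (by simp) ((measurable_of_countable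
    fun a : ZMod 2 => (-1 : ℝ) ^ a.val).comp (measurable_pi_apply k)) measurable_const

lemma integrable_walsh [IsFiniteMeasure μ] (m : ℕ) : Integrable (walsh m) μ :=
  Integrable.of_bound (measurable_walsh m).aestronglyMeasurable 1
    (ae_of_all _ fun x => (abs_walsh m x).le)

def zeroExtend (L : ℕ) (v : Fin L → ZMod 2) : G := fun j => if h : j < L then v ⟨j, h⟩ else 0

lemma mem_cyl_zeroExtend_iff {L : ℕ} {v : Fin L → ZMod 2} {x : G} :
    x ∈ cyl L (zeroExtend L v) ↔ v = fun i : Fin L => x i := by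
  simp only [cyl, zeroExtend, Set.mem_ofPred_eq, funext_iff, Fin.forall_iff]
  exact ⟨fun h j hj => by simp [h j hj, hj], fun h j hj => by simp [h j hj, hj]⟩

lemma integral_eq_sum_zeroExtend (hμ : IsHaarG μ) {L : ℕ} {g : G → ℝ}
    (hg : ∀ x y : G, (∀ j < L, x j = y j) → g x = g y) :
    ∫ x, g x ∂μ = 2⁻¹ ^ L * ∑ v : Fin L → ZMod 2, g (zeroExtend L v) := by
  have := hμ.isProbabilityMeasure
  have hdecomp : ∀ x, g x = ∑ v : Fin L → ZMod 2,
      (cyl L (zeroExtend L v)).indicator (fun _ => g (zeroExtend L v)) x := by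
    intro x
    rw [sum_eq_single_of_mem (fun i : Fin L => x i) (mem_univ _) fun v _ hv =>
      Set.indicator_of_notMem (mt mem_cyl_zeroExtend_iff.1 hv) _,
      Set.indicator_of_mem (mem_cyl_zeroExtend_iff.2 rfl)]
    exact hg _ _ fun j hj => by simp [zeroExtend, hj]
  rw [integral_congr_ae (ae_of_all _ hdecomp), integral_finsetSum _ fun v _ =>
    (integrable_const _).indicator (measurableSet_cyl _ _), mul_sum]
  refine sum_congr rfl fun v _ => ?_
  rw [integral_indicator_const _ (measurableSet_cyl _ _), measureReal_def, hμ, smul_eq_mul]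
  simp

lemma integral_walsh (hμ : IsHaarG μ) (m : ℕ) :
    ∫ x, walsh m x ∂μ = if m = 0 then 1 else 0 := by
  have := hμ.isProbabilityMeasure
  split_ifs with hm
  · simp [hm, walsh]
  obtain ⟨t, ht, -⟩ := Nat.exists_most_significant_bit hm
  have htm : t < m := lt_of_lt_of_le Nat.lt_two_pow_self (Nat.ge_two_pow_of_testBit ht)
  rw [integral_eq_sum_zeroExtend hμ fun x y => walsh_congr, mul_eq_zero]
  right
  set e : Fin m → ZMod 2 := Pi.single ⟨t, htm⟩ 1
  have hflip : ∀ v, walsh m (zeroExtend m (v + e)) = - walsh m (zeroExtend m v) := by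
    intro v
    rw [← mul_neg_one, ← walsh_eG ht, ← walsh_add]
    refine walsh_congr fun j hj => ?_
    simp [zeroExtend, hj, e, eG, Pi.single_apply, Fin.ext_iff]
  have := Equiv.sum_comp (Equiv.addRight e) fun v => walsh m (zeroExtend m v)
  simp only [Equiv.coe_addRight, hflip, sum_neg_distrib] at this
  linarith

lemma coef_sum_walsh (hμ : IsHaarG μ) (s : Finset ℕ) (k : ℕ) :
    coef μ (fun x => ∑ j ∈ s, walsh j x) k = if k ∈ s then 1 else 0 := by
  have := hμ.isProbabilityMeasure
  simp only [coef, sum_mul, walsh_mul]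
  rw [integral_finsetSum _ fun j _ => integrable_walsh _]
  simp only [integral_walsh hμ, Nat.xor_eq_zero_iff]
  exact sum_ite_eq' s k fun _ => 1

lemma psum_sum_walsh (hμ : IsHaarG μ) (s : Finset ℕ) (q : ℕ) (x : G) :
    psum μ q (fun y => ∑ j ∈ s, walsh j y) x = ∑ k ∈ range q ∩ s, walsh k x := by
  simp only [psum, coef_sum_walsh hμ, ite_mul, one_mul, zero_mul, sum_ite_mem]

lemma psum_dirichlet_sub (hμ : IsHaarG μ) {a b q : ℕ} (haq : a ≤ q)
    (hqb : q ≤ b) (x : G) :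
    psum μ q (fun y => dirichlet b y - dirichlet a y) x = dirichlet q x - dirichlet a x := by
  have hab : (fun y => dirichlet b y - dirichlet a y) = fun y => ∑ j ∈ Ico a b, walsh j y :=
    funext fun y => (sum_Ico_eq_sub _ (haq.trans hqb)).symm
  have hrange : range q ∩ Ico a b = Ico a q := by
    ext k; simp only [mem_inter, mem_range, mem_Ico]; omega
  rw [hab, psum_sum_walsh hμ, hrange, sum_Ico_eq_sub _ haq, dirichlet, dirichlet]

end Haar

lemma mem_cyl_eG_iff {s : ℕ} {x : G} : x ∈ cyl (s + 1) (eG s) ↔ x s = 1 ∧ ∀ j < s, x j = 0 := by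
  simp only [cyl, eG, Set.mem_ofPred_eq, Nat.lt_succ_iff_lt_or_eq, or_imp, forall_and,
    forall_eq, if_pos]
  exact and_comm.trans (and_congr_right fun _ =>
    forall₂_congr fun j hj => by rw [if_neg hj.ne])

lemma dirichlet_two_pow_succ_mul_eq_zero {s : ℕ} {x : G} (hx : x s = 1) (A : ℕ) :
    dirichlet (2 ^ (s + 1) * A) x = 0 := by
  have hflip : ∀ k, walsh (k ^^^ 2 ^ s) x = - walsh k x := fun k => by
    rw [← walsh_mul, walsh_two_pow, rad, hx, ZMod.val_one, pow_one, mul_neg_one]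
  refine sum_involution (fun k _ => k ^^^ 2 ^ s)
    (fun k _ => by rw [hflip, add_neg_cancel])
    (fun k _ hk heq => hk (by have := hflip k; rw [heq] at this; linarith))
    (fun k hk => ?_) (fun k _ => Nat.xor_xor_cancel_right k _)
  rw [mem_range, mul_comm, ← Nat.div_lt_iff_lt_mul (Nat.two_pow_pos _)] at hk ⊢
  rwa [Nat.xor_div_two_pow, Nat.div_eq_of_lt (Nat.pow_lt_pow_right (by norm_num)
    (Nat.lt_succ_self s)), Nat.xor_zero]

lemma dirichlet_two_pow_succ_mul_add_two_pow {s : ℕ} {x : G} (hx : x ∈ cyl (s + 1) (eG s))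
    (A : ℕ) : dirichlet (2 ^ (s + 1) * A + 2 ^ s) x = 2 ^ s * walsh (2 ^ (s + 1) * A) x := by
  obtain ⟨hxs, hxlt⟩ := mem_cyl_eG_iff.1 hx
  have htail : ∀ r ∈ range (2 ^ s),
      walsh (2 ^ (s + 1) * A + r) x = walsh (2 ^ (s + 1) * A) x := fun r hr => by
    have hr := mem_range.1 hr
    rw [Nat.two_pow_mul_add_eq_xor
      (hr.trans (Nat.pow_lt_pow_right (by norm_num) (Nat.lt_succ_self s))), ← walsh_mul, walsh_eq_one_of_lt_two_pow hr hxlt, mul_one]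
  rw [dirichlet, sum_range_add, ← dirichlet, dirichlet_two_pow_succ_mul_eq_zero hxs,
    zero_add, sum_congr rfl htail, sum_const, card_range, nsmul_eq_mul]
  push_cast
  rfl

lemma abs_dirichlet_of_mem_cyl {m : ℕ} (hm : m ≠ 0) {x : G}
    (hx : x ∈ cyl (lo m + 1) (eG (lo m))) : |dirichlet m x| = 2 ^ lo m := by
  obtain ⟨A, hA⟩ := exists_eq_two_pow_lo_succ_mul_add hm
  have hD := dirichlet_two_pow_succ_mul_add_two_pow hx A
  rw [← hA] at hD
  rw [hD, abs_mul, abs_walsh, mul_one, abs_of_pos (by positivity)]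

/-- Lower bound for partial sums of `f_n = D_{2^{n+1}} - D_{2^n}`: there is an absolute
constant `c > 0` such that whenever `n ≥ 3`, `0 ≤ s < n`, `2^n < q < 2^{n+1}` with `[q] = s`,
then `|S_q f_n(x)| ≥ c 2^s` for every `x ∈ I_{s+1}(e_s)`. -/
theorem stmt16 (μ : Measure G) (hμ : IsHaarG μ) :
    ∃ c : ℝ, 0 < c ∧ ∀ n : ℕ, 3 ≤ n → ∀ s < n, ∀ q : ℕ,
      2 ^ n < q → q < 2 ^ (n + 1) → lo q = s →
      ∀ x ∈ cyl (s + 1) (eG s),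
        c * 2 ^ s ≤
          |psum μ q (fun y => dirichlet (2 ^ (n + 1)) y - dirichlet (2 ^ n) y) x| := by
  refine ⟨1, one_pos, fun n _ s hs q hq₁ hq₂ hlo x hx => ?_⟩
  subst hlo
  have hfar : dirichlet (2 ^ n) x = 0 := by
    have := dirichlet_two_pow_succ_mul_eq_zero (mem_cyl_eG_iff.1 hx).1 (2 ^ (n - (lo q + 1)))
    rwa [← pow_add, Nat.add_sub_cancel' hs] at this
  rw [psum_dirichlet_sub hμ hq₁.le hq₂.le, hfar, sub_zero,
    abs_dirichlet_of_mem_cyl (Nat.zero_le _ |>.trans_lt hq₁).ne' hx, one_mul]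

end
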